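/- The type A = ∀X((X → ∀Y X) → (X → X)), formed in the variant of System F allowing vacuous quantification, contains the identity I = λx.x in its interpretation |A|, yet I is not typable of type A in System F; however I is βη-equivalent to I' = λxλy.(x)y, which is typable of type A. -/
import Mathlib


/-! Untyped λ-calculus (de Bruijn) and System F realizability semantics. -/

/-- Untyped λ-terms in de Bruijn notation. -/
inductive Lam : Type
  | var : ℕ → Lam
  | app : Lam → Lam → Lam
  | lam : Lam → Lam
deriving DecidableEq

namespace Lam

/-- Shift the free variables ≥ `d` up by one. -/
def lift (d : ℕ) : Lam → Lam
  | var n => if n < d then var n else var (n + 1)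
  | app t u => app (lift d t) (lift d u)
  | lam t => lam (lift (d + 1) t)

/-- Capture-avoiding substitution of `u` for the variable `k` (de Bruijn). -/
def subst : Lam → ℕ → Lam → Lam
  | var n, k, u => if n = k then u else if k < n then var (n - 1) else var n
  | app t s, k, u => app (subst t k u) (subst s k u)
  | lam t, k, u => lam (subst t (k + 1) (lift 0 u))

/-- Free variables of a term. -/
def fv : Lam → Finset ℕ
  | var n => {n}
  | app t u => fv t ∪ fv u
  | lam t => ((fv t).erase 0).image (· - 1)

/-- One-step β-reduction. -/
inductive Beta : Lam → Lam → Prop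
  | beta (t u : Lam) : Beta (app (lam t) u) (subst t 0 u)
  | appL {t t' : Lam} (u : Lam) : Beta t t' → Beta (app t u) (app t' u)
  | appR (t : Lam) {u u' : Lam} : Beta u u' → Beta (app t u) (app t u')
  | lam {t t' : Lam} : Beta t t' → Beta (lam t) (lam t')

/-- Many-step β-reduction. -/
def BetaStar : Lam → Lam → Prop := Relation.ReflTransGen Beta

/-- β-equivalence. -/
def BetaEq : Lam → Lam → Prop := Relation.EqvGen Beta

/-- One-step η-reduction. -/
inductive Eta : Lam → Lam → Prop
  | eta (t : Lam) : Eta (lam (app (lift 0 t) (var 0))) t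
  | appL {t t' : Lam} (u : Lam) : Eta t t' → Eta (app t u) (app t' u)
  | appR (t : Lam) {u u' : Lam} : Eta u u' → Eta (app t u) (app t u')
  | lam {t t' : Lam} : Eta t t' → Eta (lam t) (lam t')

/-- βη-equivalence. -/
def BetaEtaEq : Lam → Lam → Prop := Relation.EqvGen (fun t u => Beta t u ∨ Eta t u)

/-- One-step weak head reduction: contracts the weak head redex `(λ t) u`
possibly applied to further arguments. -/
inductive Whr : Lam → Lam → Prop
  | head (t u : Lam) : Whr (app (lam t) u) (subst t 0 u)
  | appL {t t' : Lam} (u : Lam) : Whr t t' → Whr (app t u) (app t' u)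

/-- Many-step weak head reduction (`≻_f`). -/
def WhrStar : Lam → Lam → Prop := Relation.ReflTransGen Whr

/-- A term is normal when it has no β-redex. -/
def Normal (t : Lam) : Prop := ∀ u, ¬ Beta t u

def Normalizable (t : Lam) : Prop := ∃ u, BetaStar t u ∧ Normal u

/-- `(t)v₁…vₘ`. -/
def appList (t : Lam) (l : List Lam) : Lam := l.foldl app t

end Lam

/-- A set of λ-terms is saturated when it is closed under weak-head-expansion. -/
def Saturated (G : Set Lam) : Prop := ∀ t u : Lam, Lam.WhrStar t u → u ∈ G → t ∈ G

/-- A set of λ-terms is β-saturated when it is closed under β-expansion. -/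
def BetaSaturated (G : Set Lam) : Prop := ∀ t u : Lam, Lam.BetaStar t u → u ∈ G → t ∈ G

/-- `G → G' = {u : ∀ t ∈ G, (u)t ∈ G'}`. -/
def arrowSet (G G' : Set Lam) : Set Lam := {u | ∀ t ∈ G, Lam.app u t ∈ G'}

/-- Types of System F (de Bruijn type variables). -/
inductive Ty : Type
  | var : ℕ → Ty
  | arr : Ty → Ty → Ty
  | all : Ty → Ty
deriving DecidableEq

namespace Ty

/-- Shift the free type variables ≥ `d` up by one. -/
def lift (d : ℕ) : Ty → Ty
  | var n => if n < d then var n else var (n + 1)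
  | arr A B => arr (lift d A) (lift d B)
  | all A => all (lift (d + 1) A)

/-- Capture-avoiding substitution of the type `C` for the type variable `k`. -/
def subst : Ty → ℕ → Ty → Ty
  | var n, k, C => if n = k then C else if k < n then var (n - 1) else var n
  | arr A B, k, C => arr (subst A k C) (subst B k C)
  | all A, k, C => all (subst A (k + 1) (lift 0 C))

/-- Free type variables. -/
def fv : Ty → Finset ℕ
  | var n => {n}
  | arr A B => fv A ∪ fv B
  | all A => ((fv A).erase 0).image (· - 1)

end Ty

mutual
  /-- ∀⁺ types: types with positive quantifiers. -/
  inductive PosTy : Ty → Prop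
    | var (n : ℕ) : PosTy (Ty.var n)
    | arr {B A : Ty} : NegTy B → PosTy A → PosTy (Ty.arr B A)
    | all {A : Ty} : PosTy A → 0 ∈ A.fv → PosTy (Ty.all A)
  /-- ∀⁻ types: types with negative quantifiers. -/
  inductive NegTy : Ty → Prop
    | var (n : ℕ) : NegTy (Ty.var n)
    | arr {B A : Ty} : PosTy B → NegTy A → NegTy (Ty.arr B A)
end

/-- Typing contexts: a partial assignment of types to (de Bruijn) term variables. -/
def Ctx : Type := ℕ → Option Ty

def Ctx.empty : Ctx := fun _ => none

def Ctx.cons (B : Ty) (Γ : Ctx) : Ctx := fun n =>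
  match n with
  | 0 => some B
  | n + 1 => Γ n

/-- Shift all type variables of a context (used for ∀-introduction: the fresh
type variable `0` does not occur in the shifted context). -/
def Ctx.liftTy (Γ : Ctx) : Ctx := fun n => (Γ n).map (Ty.lift 0)

/-- Curry-style typing of System F. -/
inductive TyJ : Ctx → Lam → Ty → Prop
  | var {Γ : Ctx} {x : ℕ} {A : Ty} : Γ x = some A → TyJ Γ (Lam.var x) A
  | lam {Γ : Ctx} {B C : Ty} {t : Lam} :
      TyJ (Ctx.cons B Γ) t C → TyJ Γ (Lam.lam t) (Ty.arr B C)
  | app {Γ : Ctx} {B C : Ty} {u v : Lam} :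
      TyJ Γ u (Ty.arr B C) → TyJ Γ v B → TyJ Γ (Lam.app u v) C
  | allI {Γ : Ctx} {A : Ty} {t : Lam} :
      TyJ (Ctx.liftTy Γ) t A → TyJ Γ t (Ty.all A)
  | allE {Γ : Ctx} {A : Ty} {t : Lam} (C : Ty) :
      TyJ Γ t (Ty.all A) → TyJ Γ t (Ty.subst A 0 C)

/-- System F0 : System F where ∀-elimination only instantiates by type variables. -/
inductive TyJ0 : Ctx → Lam → Ty → Prop
  | var {Γ : Ctx} {x : ℕ} {A : Ty} : Γ x = some A → TyJ0 Γ (Lam.var x) A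
  | lam {Γ : Ctx} {B C : Ty} {t : Lam} :
      TyJ0 (Ctx.cons B Γ) t C → TyJ0 Γ (Lam.lam t) (Ty.arr B C)
  | app {Γ : Ctx} {B C : Ty} {u v : Lam} :
      TyJ0 Γ u (Ty.arr B C) → TyJ0 Γ v B → TyJ0 Γ (Lam.app u v) C
  | allI {Γ : Ctx} {A : Ty} {t : Lam} :
      TyJ0 (Ctx.liftTy Γ) t A → TyJ0 Γ t (Ty.all A)
  | allE {Γ : Ctx} {A : Ty} {t : Lam} (Y : ℕ) :
      TyJ0 Γ t (Ty.all A) → TyJ0 Γ t (Ty.subst A 0 (Ty.var Y))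

/-- Interpretations: assignments of sets of λ-terms to type variables. -/
def Interp : Type := ℕ → Set Lam

def Interp.cons (G : Set Lam) (I : Interp) : Interp := fun n =>
  match n with
  | 0 => G
  | n + 1 => I n

/-- Interpretation of types, parameterized by the admissibility class `C` of
sets used to interpret type variables (e.g. `Saturated`). -/
def interpC (C : Set Lam → Prop) : Ty → Interp → Set Lam
  | Ty.var n, I => I n
  | Ty.arr A B, I => arrowSet (interpC C A I) (interpC C B I)
  | Ty.all A, I => ⋂ (G : Set Lam) (_ : C G), interpC C A (Interp.cons G I)

/-- Girard–Krivine interpretation `|A|_I` with saturated sets. -/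
def interp : Ty → Interp → Set Lam := interpC Saturated

/-- `|A|`, the intersection of `|A|_I` over all admissible interpretations. -/
def SemC (C : Set Lam → Prop) (A : Ty) : Set Lam :=
  {t | ∀ I : Interp, (∀ n, C (I n)) → t ∈ interpC C A I}

/-- `|A| = ⋂_I |A|_I` over interpretations into saturated sets. -/
def Sem (A : Ty) : Set Lam := SemC Saturated A


/-! ### Auxiliary material -/

namespace Aux

lemma lift_var (d n : ℕ) :
    Ty.lift d (Ty.var n) = if n < d then Ty.var n else Ty.var (n+1) := rfl

lemma subst_var (n k : ℕ) (C : Ty) :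
    Ty.subst (Ty.var n) k C
      = if n = k then C else if k < n then Ty.var (n-1) else Ty.var n := rfl

lemma lift_lift (T : Ty) : ∀ c d, c ≤ d →
    Ty.lift c (Ty.lift d T) = Ty.lift (d+1) (Ty.lift c T) := by
  induction T with
  | var n =>
      intro c d h
      simp only [lift_var]
      split_ifs <;> simp only [lift_var] <;> split_ifs <;>
        first | rfl | (exfalso; omega) | (congr 1; omega)
  | arr A B ihA ihB => intro c d h; simp [Ty.lift, ihA c d h, ihB c d h]
  | all A ih => intro c d h; simp [Ty.lift, ih (c+1) (d+1) (by omega)]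

lemma subst_lift (T : Ty) : ∀ d X, Ty.subst (Ty.lift d T) d X = T := by
  induction T with
  | var n =>
      intro d X
      simp only [lift_var]
      split_ifs <;> simp only [subst_var] <;> split_ifs <;>
        first | rfl | (exfalso; omega) | (congr 1; omega)
  | arr A B ihA ihB => intro d X; simp [Ty.lift, Ty.subst, ihA, ihB]
  | all A ih => intro d X; simp [Ty.lift, Ty.subst, ih]

lemma lift_subst (B : Ty) : ∀ c k, c ≤ k → ∀ D,
    Ty.lift c (Ty.subst B k D) = Ty.subst (Ty.lift c B) (k+1) (Ty.lift c D) := by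
  induction B with
  | var n =>
      intro c k h D
      simp only [subst_var, lift_var]
      split_ifs <;> simp only [subst_var, lift_var] <;> split_ifs <;>
        first | rfl | (exfalso; omega) | (congr 1; omega)
  | arr A B ihA ihB => intro c k h D; simp [Ty.lift, Ty.subst, ihA c k h, ihB c k h]
  | all A ih =>
      intro c k h D
      simp only [Ty.lift, Ty.subst]
      rw [ih (c+1) (k+1) (by omega), lift_lift D 0 c (by omega)]

lemma subst_subst (A : Ty) : ∀ j k, j ≤ k → ∀ D E,
    Ty.subst (Ty.subst A (k+1) (Ty.lift j D)) j (Ty.subst E k D)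
      = Ty.subst (Ty.subst A j E) k D := by
  induction A with
  | var n =>
      intro j k h D E
      simp only [subst_var]
      split_ifs <;> simp only [subst_var, subst_lift, lift_var] <;> (try split_ifs) <;>
        first | rfl | (exfalso; omega) | (congr 1; omega)
  | arr P Q ihP ihQ => intro j k h D E; simp [Ty.subst, ihP j k h, ihQ j k h]
  | all P ih =>
      intro j k h D E
      simp only [Ty.subst]
      rw [lift_lift D 0 j (by omega), lift_subst E 0 k (by omega),
        ih (j+1) (k+1) (by omega)]

/-- Types derivable for a variable of declared type `B`. -/
inductive RelV : Ty → Ty → Prop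
  | base (B : Ty) : RelV B B
  | gen {B A : Ty} : RelV (Ty.lift 0 B) A → RelV B (Ty.all A)
  | inst {B A : Ty} (C : Ty) : RelV B (Ty.all A) → RelV B (Ty.subst A 0 C)

lemma relV_subst {B C : Ty} (h : RelV B C) :
    ∀ k D, RelV (Ty.subst B k D) (Ty.subst C k D) := by
  induction h with
  | base B => intro k D; exact RelV.base _
  | @gen B A h ih =>
      intro k D
      have h1 := ih (k+1) (Ty.lift 0 D)
      rw [← lift_subst B 0 k (by omega)] at h1
      exact RelV.gen h1
  | @inst B A C h ih =>
      intro k D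
      have h1 := RelV.inst (Ty.subst C k D) (ih k D)
      rwa [subst_subst _ 0 k (by omega)] at h1

def IsAll : Ty → Prop
  | Ty.all _ => True
  | _ => False

lemma isAll_lift {T : Ty} (h : IsAll T) (d : ℕ) : IsAll (Ty.lift d T) := by
  cases T <;> simp_all [IsAll, Ty.lift]

lemma isAll_subst {T : Ty} (h : IsAll T) (k : ℕ) (D : Ty) : IsAll (Ty.subst T k D) := by
  cases T <;> simp_all [IsAll, Ty.subst]

inductive GoodT : Ty → Prop
  | arr {U V : Ty} : IsAll V → GoodT (Ty.arr U V)
  | all {A : Ty} : GoodT A → GoodT (Ty.all A)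

lemma goodT_lift {T : Ty} (h : GoodT T) : ∀ d, GoodT (Ty.lift d T) := by
  induction h with
  | arr hV => intro d; exact GoodT.arr (isAll_lift hV _)
  | all _ ih => intro d; exact GoodT.all (ih _)

lemma goodT_subst {T : Ty} (h : GoodT T) : ∀ k D, GoodT (Ty.subst T k D) := by
  induction h with
  | arr hV => intro k D; exact GoodT.arr (isAll_subst hV _ _)
  | all _ ih => intro k D; exact GoodT.all (ih _ _)

lemma relV_good {B C : Ty} (h : RelV B C) (hB : GoodT B) : GoodT C := by
  induction h with
  | base B => exact hB
  | gen _ ih => exact GoodT.all (ih (goodT_lift hB 0))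
  | inst C _ ih =>
      have h' := ih hB
      cases h' with
      | all hA => exact goodT_subst hA 0 C

lemma var_relV {Γ : Ctx} {t : Lam} {C : Ty} (h : TyJ Γ t C) :
    ∀ x B, t = Lam.var x → Γ x = some B → RelV B C := by
  induction h with
  | var hx =>
      intro x B ht hB
      cases ht
      rw [hx] at hB
      cases hB
      exact RelV.base _
  | lam _ _ => intro x B ht _; cases ht
  | app _ _ _ _ => intro x B ht _; cases ht
  | allI _ ih =>
      intro x B ht hB
      exact RelV.gen (ih x (Ty.lift 0 B) ht (by simp [Ctx.liftTy, hB]))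
  | allE C _ ih =>
      intro x B ht hB
      exact RelV.inst C (ih x B ht hB)

/-- Shapes of types derivable for `λx.x`. -/
inductive IdTy : Ty → Prop
  | lamc {B C : Ty} : RelV B C → IdTy (Ty.arr B C)
  | gen {A : Ty} : IdTy A → IdTy (Ty.all A)

lemma idTy_subst {T : Ty} (h : IdTy T) : ∀ k D, IdTy (Ty.subst T k D) := by
  induction h with
  | lamc hR => intro k D; exact IdTy.lamc (relV_subst hR k D)
  | gen _ ih => intro k D; exact IdTy.gen (ih (k+1) (Ty.lift 0 D))

lemma idTy_of {Γ : Ctx} {t : Lam} {T : Ty} (h : TyJ Γ t T) :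
    t = Lam.lam (Lam.var 0) → IdTy T := by
  induction h with
  | var _ => intro ht; cases ht
  | lam h _ =>
      intro ht
      cases ht
      exact IdTy.lamc (var_relV h 0 _ rfl rfl)
  | app _ _ _ _ => intro ht; cases ht
  | allI _ ih => intro ht; exact IdTy.gen (ih ht)
  | allE C _ ih =>
      intro ht
      have h' := ih ht
      cases h' with
      | gen hA => exact idTy_subst hA 0 C

lemma saturated_univ : Saturated Set.univ := fun _ _ _ _ => trivial

end Aux

/-- for `A = ∀X((X → ∀Y X) → (X → X))` (vacuous quantification),
the identity `I = λx.x` belongs to `|A|` but is not typable of type `A`,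
while `I' = λxλy.(x)y` is βη-equivalent to `I` and is typable of type `A`. -/
theorem counterexample_vacuous_quantification :
    (Lam.lam (Lam.var 0)) ∈
      Sem (Ty.all (Ty.arr (Ty.arr (Ty.var 0) (Ty.all (Ty.var 1)))
        (Ty.arr (Ty.var 0) (Ty.var 0)))) ∧
    ¬ TyJ Ctx.empty (Lam.lam (Lam.var 0))
      (Ty.all (Ty.arr (Ty.arr (Ty.var 0) (Ty.all (Ty.var 1)))
        (Ty.arr (Ty.var 0) (Ty.var 0)))) ∧
    Lam.BetaEtaEq (Lam.lam (Lam.var 0))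
      (Lam.lam (Lam.lam (Lam.app (Lam.var 1) (Lam.var 0)))) ∧
    TyJ Ctx.empty (Lam.lam (Lam.lam (Lam.app (Lam.var 1) (Lam.var 0))))
      (Ty.all (Ty.arr (Ty.arr (Ty.var 0) (Ty.all (Ty.var 1)))
        (Ty.arr (Ty.var 0) (Ty.var 0)))) := by
  refine ⟨?_, ?_, ?_, ?_⟩
  · -- λx.x ∈ |A|
    intro I hI
    simp only [interpC]
    refine Set.mem_iInter₂.2 fun G hG => ?_
    intro t ht u hu
    have htu : Lam.app t u ∈ G := by
      have h1 := ht u hu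
      exact Set.mem_iInter₂.1 h1 Set.univ Aux.saturated_univ
    refine hG _ _ ?_ htu
    exact Relation.ReflTransGen.single (Lam.Whr.appL u (Lam.Whr.head (Lam.var 0) t))
  · -- λx.x not typable of type A
    intro h
    have h1 := Aux.idTy_of h rfl
    cases h1 with
    | gen h2 =>
      cases h2 with
      | lamc h3 =>
        have hg := Aux.relV_good h3 (Aux.GoodT.arr (by trivial))
        cases hg with
        | arr hV => exact hV
  · -- βη-equivalence
    exact Relation.EqvGen.symm _ _
      (Relation.EqvGen.rel _ _ (Or.inr (Lam.Eta.lam (Lam.Eta.eta (Lam.var 0)))))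
  · -- I' typable of type A
    apply TyJ.allI
    apply TyJ.lam
    apply TyJ.lam
    have h0 : TyJ (Ctx.cons (Ty.var 0) (Ctx.cons
        (Ty.arr (Ty.var 0) (Ty.all (Ty.var 1))) (Ctx.liftTy Ctx.empty)))
        (Lam.app (Lam.var 1) (Lam.var 0)) (Ty.all (Ty.var 1)) :=
      TyJ.app (TyJ.var rfl) (TyJ.var rfl)
    have h1 := TyJ.allE (Ty.var 0) h0
    have h2 : Ty.subst (Ty.var 1) 0 (Ty.var 0) = Ty.var 0 := by
      simp [Ty.subst]
    rwa [h2] at h1
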